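/- arXiv:2503.17638 — 2 statements merged into one kernel-verified Lean document; each statement's English description precedes it below -/
import Mathlib

section
/- Let c_o, c_u ≥ 0 with c_o + c_u > 0, let σ > 0, σ_d ≥ 0, ρ ∈ [−1, 1) with (1 + ρ)·σ²/2 + σ_d² > 0, and let m ∈ ℝ. Then J(m, √((1 + ρ)·σ²/2 + σ_d²)) < J(m, √(σ² + σ_d²)), where J(m, s) := (c_o + c_u)·(s/√(2π))·exp(−m²/(2s²)) + m·(c_o − c_u) + m·[c_u·Φ(m/s) − c_o·Φ(−m/s)] and Φ is the standard normal cumulative distribution function. In particular, the improvement in expected cost J(m, √(σ² + σ_d²)) − J(m, √((1 + ρ)·σ²/2 + σ_d²)) of the equal-weight PAA policy over either candidate policy is strictly positive. -/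
/-- The standard normal cumulative distribution function
`Φ(z) = ∫_{−∞}^{z} (1/√(2π))·e^{−u²/2} du`. -/
noncomputable def stdNormalCDF (z : ℝ) : ℝ :=
  ∫ u in Set.Iic z, (1 / Real.sqrt (2 * Real.pi)) * Real.exp (-u ^ 2 / 2)

/-- `J(m,s)`: the expected newsvendor cost when order-minus-demand is `N(m, s²)`. -/
noncomputable def J (c_o c_u m s : ℝ) : ℝ :=
  (c_o + c_u) * (s / Real.sqrt (2 * Real.pi)) * Real.exp (-m ^ 2 / (2 * s ^ 2)) +
    m * (c_o - c_u) +
    m * (c_u * stdNormalCDF (m / s) - c_o * stdNormalCDF (-(m / s)))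

open Real MeasureTheory Set

noncomputable def stdPdf (u : ℝ) : ℝ := (1 / Real.sqrt (2 * Real.pi)) * Real.exp (-u ^ 2 / 2)

lemma stdPdf_cont : Continuous stdPdf := by
  unfold stdPdf; fun_prop

lemma stdPdf_integrable : Integrable stdPdf := by
  have h : Integrable (fun u : ℝ => Real.exp (-(1/2 : ℝ) * u ^ 2)) :=
    integrable_exp_neg_mul_sq (by norm_num)
  have : (fun u : ℝ => Real.exp (-(1/2 : ℝ) * u ^ 2)) = fun u => Real.exp (-u ^ 2 / 2) := by
    funext u; ring_nf
  rw [this] at h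
  exact h.const_mul _

lemma hasDerivAt_stdNormalCDF (z : ℝ) : HasDerivAt stdNormalCDF (stdPdf z) z := by
  have key : stdNormalCDF = fun z => stdNormalCDF 0 + ∫ u in (0:ℝ)..z, stdPdf u := by
    funext z
    have := intervalIntegral.integral_Iic_sub_Iic (μ := volume) (f := stdPdf)
      stdPdf_integrable.integrableOn stdPdf_integrable.integrableOn (a := 0) (b := z)
    have h2 : stdNormalCDF z - stdNormalCDF 0 = ∫ u in (0:ℝ)..z, stdPdf u := this
    linarith
  rw [key]
  have h := intervalIntegral.integral_hasDerivAt_right (a := 0) (b := z)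
    (stdPdf_integrable.intervalIntegrable)
    (stdPdf_cont.aestronglyMeasurable.stronglyMeasurableAtFilter)
    (stdPdf_cont.continuousAt)
  exact h.const_add _

lemma hasDerivAt_J (c_o c_u m : ℝ) {s : ℝ} (hs : 0 < s) :
    HasDerivAt (fun s => J c_o c_u m s) ((c_o + c_u) * stdPdf (m / s)) s := by
  have hs' : s ≠ 0 := hs.ne'
  have hK : Real.sqrt (2 * Real.pi) ≠ 0 := by
    positivity
  -- derivative of m / s
  have h1 : HasDerivAt (fun s : ℝ => m / s) (-(m / s ^ 2)) s := by
    have := (hasDerivAt_inv hs').const_mul m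
    simpa [div_eq_mul_inv, mul_comm] using this
  have hΦ1 : HasDerivAt (fun s : ℝ => stdNormalCDF (m / s))
      (stdPdf (m / s) * -(m / s ^ 2)) s :=
    (hasDerivAt_stdNormalCDF (m / s)).comp s h1
  have hΦ2 : HasDerivAt (fun s : ℝ => stdNormalCDF (-(m / s)))
      (stdPdf (-(m / s)) * (m / s ^ 2)) s := by
    have := (hasDerivAt_stdNormalCDF (-(m / s))).comp s h1.neg
    simpa [Function.comp_def] using this
  -- derivative of exp(-m^2/(2 s^2))
  have hden : HasDerivAt (fun s : ℝ => 2 * s ^ 2) (2 * (2 * s ^ 1)) s :=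
    (hasDerivAt_pow 2 s).const_mul 2
  have hden2 : (2 : ℝ) * s ^ 2 ≠ 0 := by positivity
  have hinner : HasDerivAt (fun s : ℝ => -m ^ 2 / (2 * s ^ 2))
      ((0 * (2 * s ^ 2) - (-m ^ 2) * (2 * (2 * s ^ 1))) / (2 * s ^ 2) ^ 2) s :=
    (hasDerivAt_const s (-m ^ 2)).div hden hden2
  have hE := hinner.exp
  -- derivative of (c_o+c_u) * (s / K)
  have hA : HasDerivAt (fun s : ℝ => (c_o + c_u) * (s / Real.sqrt (2 * Real.pi)))
      ((c_o + c_u) * (1 / Real.sqrt (2 * Real.pi))) s := by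
    have := ((hasDerivAt_id s).div_const (Real.sqrt (2 * Real.pi))).const_mul (c_o + c_u)
    simpa using this
  have hT1 := hA.mul hE
  have hT3 := ((hΦ1.const_mul c_u).sub (hΦ2.const_mul c_o)).const_mul m
  have htot := (hT1.add (hasDerivAt_const s (m * (c_o - c_u)))).add hT3
  have heq : (fun s => J c_o c_u m s) = fun s =>
      (c_o + c_u) * (s / Real.sqrt (2 * Real.pi)) * Real.exp (-m ^ 2 / (2 * s ^ 2)) +
        m * (c_o - c_u) +
        m * (c_u * stdNormalCDF (m / s) - c_o * stdNormalCDF (-(m / s))) := by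
    funext s; rfl
  rw [heq]
  refine htot.congr_deriv ?_
  have e1 : -(-(m / s)) ^ 2 / 2 = -m ^ 2 / (2 * s ^ 2) := by ring
  have e2 : -(m / s) ^ 2 / 2 = -m ^ 2 / (2 * s ^ 2) := by ring
  simp only [stdPdf, e1, e2]
  field_simp
  ring

lemma J_strictMonoOn (c_o c_u m : ℝ) (hsum : 0 < c_o + c_u) :
    StrictMonoOn (fun s => J c_o c_u m s) (Set.Ioi 0) := by
  apply strictMonoOn_of_deriv_pos (convex_Ioi 0)
  · intro s hs
    exact ((hasDerivAt_J c_o c_u m hs).differentiableAt).continuousAt.continuousWithinAt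
  · intro s hs
    rw [interior_Ioi] at hs
    rw [(hasDerivAt_J c_o c_u m hs).deriv]
    have : 0 < stdPdf (m / s) := by
      unfold stdPdf
      positivity
    positivity

/-- Proposition 3: The equal-weight PAA policy, whose order-minus-demand
variance is `(1+ρ)σ²/2 + σ_d²`, has strictly smaller expected cost than either candidate
policy, whose order-minus-demand variance is `σ² + σ_d²`. -/
theorem paa_strict_improvement_from_diversification (c_o c_u : ℝ)
    (hco : 0 ≤ c_o) (hcu : 0 ≤ c_u) (hsum : 0 < c_o + c_u)
    (σ σ_d ρ : ℝ) (hσ : 0 < σ) (hσd : 0 ≤ σ_d) (hρ₁ : -1 ≤ ρ) (hρ₂ : ρ < 1)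
    (hpos : 0 < (1 + ρ) * σ ^ 2 / 2 + σ_d ^ 2) (m : ℝ) :
    J c_o c_u m (Real.sqrt ((1 + ρ) * σ ^ 2 / 2 + σ_d ^ 2)) <
      J c_o c_u m (Real.sqrt (σ ^ 2 + σ_d ^ 2)) := by
  have hab : (1 + ρ) * σ ^ 2 / 2 + σ_d ^ 2 < σ ^ 2 + σ_d ^ 2 := by nlinarith [mul_pos (by linarith : (0:ℝ) < 1 - ρ) (pow_pos hσ 2)]
  have h1 : 0 < Real.sqrt ((1 + ρ) * σ ^ 2 / 2 + σ_d ^ 2) := Real.sqrt_pos.mpr hpos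
  have h2 : Real.sqrt ((1 + ρ) * σ ^ 2 / 2 + σ_d ^ 2) < Real.sqrt (σ ^ 2 + σ_d ^ 2) :=
    Real.sqrt_lt_sqrt hpos.le hab
  exact J_strictMonoOn c_o c_u m hsum h1 (lt_trans h1 h2) h2
end

section
/- Let c_o, c_u > 0 and s > 0. Then the function m ↦ J(m, s) := (c_o + c_u)·(s/√(2π))·exp(−m²/(2s²)) + m·(c_o − c_u) + m·[c_u·Φ(m/s) − c_o·Φ(−m/s)] is strictly convex on ℝ, where Φ is the standard normal cumulative distribution function. -/
open MeasureTheory Real Set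

/-- Standard normal density. -/
noncomputable def stdG (u : ℝ) : ℝ := (1 / Real.sqrt (2 * Real.pi)) * Real.exp (-u ^ 2 / 2)

lemma stdG_pos (u : ℝ) : 0 < stdG u := by
  have : 0 < Real.sqrt (2 * Real.pi) := Real.sqrt_pos.2 (by positivity)
  exact mul_pos (by positivity) (Real.exp_pos _)

lemma stdG_cont : Continuous stdG := by
  unfold stdG
  exact continuous_const.mul (Real.continuous_exp.comp (by continuity))

lemma stdG_integrable : Integrable stdG := by
  have h : Integrable (fun u : ℝ => Real.exp (-(1/2 : ℝ) * u ^ 2)) :=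
    integrable_exp_neg_mul_sq (by norm_num)
  have : stdG = fun u => (1 / Real.sqrt (2 * Real.pi)) * Real.exp (-(1/2 : ℝ) * u ^ 2) := by
    funext u; unfold stdG; ring_nf
  rw [this]
  exact h.const_mul _

lemma stdNormalCDF_eq (z : ℝ) : stdNormalCDF z = ∫ u in Set.Iic z, stdG u := rfl

lemma stdNormalCDF_hasDerivAt (z : ℝ) : HasDerivAt stdNormalCDF (stdG z) z := by
  have heq : ∀ x : ℝ, stdNormalCDF x = stdNormalCDF 0 + ∫ u in (0:ℝ)..x, stdG u := by
    intro x
    have := intervalIntegral.integral_Iic_sub_Iic (f := stdG) (μ := volume)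
      (stdG_integrable.integrableOn (s := Iic (0:ℝ)))
      (stdG_integrable.integrableOn (s := Iic x))
    rw [stdNormalCDF_eq, stdNormalCDF_eq]
    linarith [this]
  have hderiv : HasDerivAt (fun x => stdNormalCDF 0 + ∫ u in (0:ℝ)..x, stdG u) (stdG z) z := by
    have h1 : HasDerivAt (fun x => ∫ u in (0:ℝ)..x, stdG u) (stdG z) z :=
      intervalIntegral.integral_hasDerivAt_right
        (stdG_integrable.intervalIntegrable)
        (stdG_cont.stronglyMeasurable.stronglyMeasurableAtFilter)
        stdG_cont.continuousAt
    simpa using (h1.const_add (stdNormalCDF 0))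
  apply hderiv.congr_of_eventuallyEq
  filter_upwards with x using (heq x)

lemma stdNormalCDF_strictMono : StrictMono stdNormalCDF := by
  intro a b hab
  have h : stdNormalCDF b - stdNormalCDF a = ∫ u in a..b, stdG u := by
    have := intervalIntegral.integral_Iic_sub_Iic (f := stdG) (μ := volume)
      (stdG_integrable.integrableOn (s := Iic a))
      (stdG_integrable.integrableOn (s := Iic b))
    rw [stdNormalCDF_eq, stdNormalCDF_eq]
    linarith [this]
  have hpos : 0 < ∫ u in a..b, stdG u :=
    intervalIntegral.intervalIntegral_pos_of_pos
      (stdG_integrable.intervalIntegrable) stdG_pos hab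
  linarith [h ▸ hpos]

lemma J_hasDerivAt (c_o c_u s : ℝ) (hs : 0 < s) (m : ℝ) :
    HasDerivAt (fun m : ℝ => J c_o c_u m s)
      ((c_o - c_u) + (c_u * stdNormalCDF (m / s) - c_o * stdNormalCDF (-(m / s)))) m := by
  have hsne : s ≠ 0 := ne_of_gt hs
  have hsq : Real.sqrt (2 * Real.pi) ≠ 0 := ne_of_gt (Real.sqrt_pos.2 (by positivity))
  -- derivative of inner exponent
  have hinner : HasDerivAt (fun m : ℝ => -m ^ 2 / (2 * s ^ 2)) (-m / s ^ 2) m := by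
    have : HasDerivAt (fun m : ℝ => -m ^ 2 / (2 * s ^ 2))
        ((-(2 * m)) / (2 * s ^ 2)) m := by
      have h1 : HasDerivAt (fun m : ℝ => m ^ 2) (2 * m) m := by
        simpa using (hasDerivAt_pow 2 m)
      simpa using (h1.neg.div_const (2 * s ^ 2))
    convert this using 1; field_simp
  have hexp : HasDerivAt (fun m : ℝ => Real.exp (-m ^ 2 / (2 * s ^ 2)))
      (Real.exp (-m ^ 2 / (2 * s ^ 2)) * (-m / s ^ 2)) m := hinner.exp
  have hterm1 : HasDerivAt (fun m : ℝ =>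
      (c_o + c_u) * (s / Real.sqrt (2 * Real.pi)) * Real.exp (-m ^ 2 / (2 * s ^ 2)))
      ((c_o + c_u) * (s / Real.sqrt (2 * Real.pi)) *
        (Real.exp (-m ^ 2 / (2 * s ^ 2)) * (-m / s ^ 2))) m := hexp.const_mul _
  have hterm2 : HasDerivAt (fun m : ℝ => m * (c_o - c_u)) (c_o - c_u) m := by
    simpa using (hasDerivAt_id m).mul_const (c_o - c_u)
  have hdiv : HasDerivAt (fun m : ℝ => m / s) (1 / s) m := by
    simpa using (hasDerivAt_id m).div_const s
  have hPhi1 : HasDerivAt (fun m : ℝ => stdNormalCDF (m / s)) (stdG (m / s) * (1 / s)) m :=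
    by have := (stdNormalCDF_hasDerivAt (m / s)).comp m hdiv; exact this
  have hPhi2 : HasDerivAt (fun m : ℝ => stdNormalCDF (-(m / s)))
      (stdG (-(m / s)) * (-(1 / s))) m :=
    by have := (stdNormalCDF_hasDerivAt (-(m / s))).comp m (h := fun m : ℝ => -(m / s)) (h' := -(1 / s)) (by exact hdiv.neg); exact this
  have hbr : HasDerivAt (fun m : ℝ => c_u * stdNormalCDF (m / s) - c_o * stdNormalCDF (-(m / s)))
      (c_u * (stdG (m / s) * (1 / s)) - c_o * (stdG (-(m / s)) * (-(1 / s)))) m :=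
    (hPhi1.const_mul c_u).sub (hPhi2.const_mul c_o)
  have hterm3 : HasDerivAt (fun m : ℝ =>
      m * (c_u * stdNormalCDF (m / s) - c_o * stdNormalCDF (-(m / s))))
      (1 * (c_u * stdNormalCDF (m / s) - c_o * stdNormalCDF (-(m / s))) +
        m * (c_u * (stdG (m / s) * (1 / s)) - c_o * (stdG (-(m / s)) * (-(1 / s))))) m :=
    (hasDerivAt_id m).mul hbr
  have htot := (hterm1.add hterm2).add hterm3
  have hJ : (fun m : ℝ => J c_o c_u m s) = fun m : ℝ =>
      (c_o + c_u) * (s / Real.sqrt (2 * Real.pi)) * Real.exp (-m ^ 2 / (2 * s ^ 2)) +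
        m * (c_o - c_u) +
        m * (c_u * stdNormalCDF (m / s) - c_o * stdNormalCDF (-(m / s))) := rfl
  rw [hJ]
  refine htot.congr_deriv ?_
  have harg : -(m / s) ^ 2 / 2 = -m ^ 2 / (2 * s ^ 2) := by rw [div_pow]; ring
  have harg2 : -(-(m / s)) ^ 2 / 2 = -m ^ 2 / (2 * s ^ 2) := by rw [neg_sq, div_pow]; ring
  have hGeq : stdG (m / s) = (1 / Real.sqrt (2 * Real.pi)) * Real.exp (-m ^ 2 / (2 * s ^ 2)) := by
    unfold stdG; rw [harg]
  have hGeq2 : stdG (-(m / s)) = (1 / Real.sqrt (2 * Real.pi)) * Real.exp (-m ^ 2 / (2 * s ^ 2)) := by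
    unfold stdG; rw [harg2]
  rw [hGeq, hGeq2]
  field_simp
  ring

/-- For fixed `s > 0` and `c_o, c_u > 0`, the map `m ↦ J(m, s)` is
strictly convex on `ℝ`. -/
theorem J_strictConvexOn_in_m (c_o c_u : ℝ) (hco : 0 < c_o) (hcu : 0 < c_u)
    (s : ℝ) (hs : 0 < s) :
    StrictConvexOn ℝ Set.univ (fun m : ℝ => J c_o c_u m s) := by
  have hderiv : ∀ m : ℝ, deriv (fun m : ℝ => J c_o c_u m s) m =
      (c_o - c_u) + (c_u * stdNormalCDF (m / s) - c_o * stdNormalCDF (-(m / s))) :=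
    fun m => (J_hasDerivAt c_o c_u s hs m).deriv
  have hcont : Continuous (fun m : ℝ => J c_o c_u m s) := by
    have : Differentiable ℝ (fun m : ℝ => J c_o c_u m s) :=
      fun m => (J_hasDerivAt c_o c_u s hs m).differentiableAt
    exact this.continuous
  apply StrictMono.strictConvexOn_univ_of_deriv hcont
  intro a b hab
  rw [hderiv a, hderiv b]
  have hds : a / s < b / s := (div_lt_div_iff_of_pos_right hs).2 hab
  have h1 : stdNormalCDF (a / s) < stdNormalCDF (b / s) := stdNormalCDF_strictMono hds
  have h2 : stdNormalCDF (-(b / s)) < stdNormalCDF (-(a / s)) :=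
    stdNormalCDF_strictMono (neg_lt_neg hds)
  nlinarith [h1, h2]
end
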